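/- arXiv:2009.11636 — 2 statements merged into one kernel-verified Lean document; each statement's English description precedes it below -/
import Mathlib

section
/- Hodge-type estimate without boundary conditions: for every integer r ≥ 1 there exists a constant C > 0 such that for every smooth vector field v : ℝ³ → ℝ³ that is 1-periodic in x₁ and x₂, one has ‖v‖_r² ≤ C ( ‖v‖_{0,r}² + ‖(curl v)_h‖_{r−1}² + ‖div v‖_{r−1}² ), where all Sobolev norms are taken over the slab Ω = 𝕋² × (−1,1). -/
open MeasureTheory

noncomputable section

/-- The lower slab `𝕋² × (-1,0)`, realized as `(0,1)² × (-1,0) ⊆ ℝ³`. -/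
def slabNeg : Set (Fin 3 → ℝ) :=
  {x | x 0 ∈ Set.Ioo (0:ℝ) 1 ∧ x 1 ∈ Set.Ioo (0:ℝ) 1 ∧ x 2 ∈ Set.Ioo (-1:ℝ) 0}

/-- The upper slab `𝕋² × (0,1)`. -/
def slabPos : Set (Fin 3 → ℝ) :=
  {x | x 0 ∈ Set.Ioo (0:ℝ) 1 ∧ x 1 ∈ Set.Ioo (0:ℝ) 1 ∧ x 2 ∈ Set.Ioo (0:ℝ) 1}

/-- The full slab `𝕋² × (-1,1)`. -/
def slabFull : Set (Fin 3 → ℝ) :=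
  {x | x 0 ∈ Set.Ioo (0:ℝ) 1 ∧ x 1 ∈ Set.Ioo (0:ℝ) 1 ∧ x 2 ∈ Set.Ioo (-1:ℝ) 1}

/-- `1`-periodicity in the two horizontal variables. -/
def HPeriodic (f : (Fin 3 → ℝ) → ℝ) : Prop :=
  ∀ x, f (x + Pi.single 0 1) = f x ∧ f (x + Pi.single 1 1) = f x

/-- Partial derivative in direction `i`. -/
def pd (i : Fin 3) (f : (Fin 3 → ℝ) → ℝ) : (Fin 3 → ℝ) → ℝ :=
  fun x => fderiv ℝ f x (Pi.single i 1)

/-- Iterated partial derivative `∂₁^a ∂₂^b ∂₃^c f`. -/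
def pdIter (a b c : ℕ) (f : (Fin 3 → ℝ) → ℝ) : (Fin 3 → ℝ) → ℝ :=
  (pd 0)^[a] ((pd 1)^[b] ((pd 2)^[c] f))

/-- The square of the `H^k` Sobolev norm on the set `S`. -/
def sobSq (k : ℕ) (S : Set (Fin 3 → ℝ)) (f : (Fin 3 → ℝ) → ℝ) : ℝ :=
  ∑ a ∈ Finset.range (k+1), ∑ b ∈ Finset.range (k+1), ∑ c ∈ Finset.range (k+1),
    if a + b + c ≤ k then ∫ x in S, (pdIter a b c f x)^2 else 0

/-- The square of the anisotropic Sobolev norm `‖f‖_{m,ℓ}²`. -/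
def sobAnisoSq (m ℓ : ℕ) (S : Set (Fin 3 → ℝ)) (f : (Fin 3 → ℝ) → ℝ) : ℝ :=
  ∑ a ∈ Finset.range (ℓ+1), ∑ b ∈ Finset.range (ℓ+1),
    if a + b ≤ ℓ then sobSq m S ((pd 0)^[a] ((pd 1)^[b] f)) else 0

/-- Squared Sobolev norm of a vector field (sum over components). -/
def sobSqVec (k : ℕ) (S : Set (Fin 3 → ℝ)) (v : (Fin 3 → ℝ) → Fin 3 → ℝ) : ℝ :=
  ∑ i : Fin 3, sobSq k S (fun x => v x i)

/-- Squared anisotropic Sobolev norm of a vector field. -/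
def sobAnisoSqVec (m ℓ : ℕ) (S : Set (Fin 3 → ℝ)) (v : (Fin 3 → ℝ) → Fin 3 → ℝ) : ℝ :=
  ∑ i : Fin 3, sobAnisoSq m ℓ S (fun x => v x i)

/-- The curl of a vector field. -/
def curl (v : (Fin 3 → ℝ) → Fin 3 → ℝ) : (Fin 3 → ℝ) → Fin 3 → ℝ :=
  fun x => ![pd 1 (fun y => v y 2) x - pd 2 (fun y => v y 1) x,
             pd 2 (fun y => v y 0) x - pd 0 (fun y => v y 2) x,
             pd 0 (fun y => v y 1) x - pd 1 (fun y => v y 0) x]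

/-- The divergence of a vector field. -/
def divg (v : (Fin 3 → ℝ) → Fin 3 → ℝ) : (Fin 3 → ℝ) → ℝ :=
  fun x => pd 0 (fun y => v y 0) x + pd 1 (fun y => v y 1) x + pd 2 (fun y => v y 2) x

/-- The unit square `(0,1)² ⊆ ℝ²`. -/
def square2 : Set (ℝ × ℝ) := (Set.Ioo (0:ℝ) 1) ×ˢ (Set.Ioo (0:ℝ) 1)

/-- Fourier coefficient of a 1-periodic function on `ℝ²`. -/
def fCoeff (g : ℝ × ℝ → ℝ) (ξ : ℤ × ℤ) : ℂ :=
  ∫ y in square2, (g y : ℂ) *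
    Complex.exp ((((-2) * Real.pi * ((ξ.1 : ℝ) * y.1 + (ξ.2 : ℝ) * y.2) : ℝ) : ℂ) * Complex.I)

/-- The square of the Fourier Sobolev norm `|g|_s²` on `𝕋²`. -/
def torusSobSq (s : ℝ) (g : ℝ × ℝ → ℝ) : ℝ :=
  ∑' ξ : ℤ × ℤ, (1 + ((ξ.1 : ℝ)^2 + (ξ.2 : ℝ)^2)) ^ s * ‖fCoeff g ξ‖^2

/-- Squared torus Sobolev norm of a vector-valued boundary function. -/
def torusSobSqVec (s : ℝ) (g : ℝ × ℝ → Fin 3 → ℝ) : ℝ :=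
  ∑ i : Fin 3, torusSobSq s (fun y => g y i)

end

/-!
The components of the curl and the divergence express every vertical derivative of `v` through
horizontal ones:
`∂₃v₁ = (curl v)₂ + ∂₁v₃`, `∂₃v₂ = ∂₂v₃ - (curl v)₁`, `∂₃v₃ = div v - ∂₁v₁ - ∂₂v₂`.
Applying `∂₁^a ∂₂^b ∂₃^c` to these identities and inducting on `c`, the `L²` norm of
`∂₁^a ∂₂^b ∂₃^(c+1) vᵢ` is controlled by `‖(curl v)_h‖_{r-1}`, `‖div v‖_{r-1}` and derivatives of
`v` with one vertical derivative fewer, down to the purely horizontal ones measured by `‖v‖_{0,r}`.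
Since the identities are pointwise, no boundary terms arise and the estimate holds on any bounded
domain.
-/

open MeasureTheory Bornology Metric
open scoped ContDiff

section PartialDerivatives

variable {f g : (Fin 3 → ℝ) → ℝ}

theorem contDiff_pd (hf : ContDiff ℝ ∞ f) (i : Fin 3) : ContDiff ℝ ∞ (pd i f) :=
  (contDiff_infty_iff_fderiv.1 hf).2.clm_apply contDiff_const

theorem contDiff_iterate_pd (hf : ContDiff ℝ ∞ f) (i : Fin 3) (n : ℕ) :
    ContDiff ℝ ∞ ((pd i)^[n] f) := by
  induction n with
  | zero => exact hf
  | succ n ih => rw [Function.iterate_succ_apply']; exact contDiff_pd ih i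

theorem contDiff_pdIter (hf : ContDiff ℝ ∞ f) (a b c : ℕ) : ContDiff ℝ ∞ (pdIter a b c f) :=
  contDiff_iterate_pd (contDiff_iterate_pd (contDiff_iterate_pd hf 2 c) 1 b) 0 a

theorem pd_comm (hf : ContDiff ℝ ∞ f) (i j : Fin 3) : pd i (pd j f) = pd j (pd i f) := by
  ext x
  have hdiff : DifferentiableAt ℝ (fderiv ℝ f) x :=
    (contDiff_infty_iff_fderiv.1 hf).2.differentiable (by simp) x
  have hsnd (k l : Fin 3) :
      pd k (pd l f) x = fderiv ℝ (fderiv ℝ f) x (Pi.single k 1) (Pi.single l 1) := by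
    change fderiv ℝ (fun y => fderiv ℝ f y (Pi.single l 1)) x (Pi.single k 1) = _
    simp [fderiv_clm_apply hdiff (differentiableAt_const _)]
  rw [hsnd, hsnd]
  exact hf.contDiffAt.isSymmSndFDerivAt (by simp; exact WithTop.coe_le_coe.2 le_top) _ _

theorem pd_add (hf : ContDiff ℝ ∞ f) (hg : ContDiff ℝ ∞ g) (i : Fin 3) :
    pd i (f + g) = pd i f + pd i g := by
  ext x
  simp [pd, fderiv_add (hf.differentiable (by simp) x) (hg.differentiable (by simp) x)]

theorem pd_neg (i : Fin 3) : pd i (-f) = -pd i f := by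
  ext x
  simp [pd, fderiv_neg]

theorem iterate_pd_add (hf : ContDiff ℝ ∞ f) (hg : ContDiff ℝ ∞ g) (i : Fin 3) (n : ℕ) :
    (pd i)^[n] (f + g) = (pd i)^[n] f + (pd i)^[n] g := by
  induction n with
  | zero => rfl
  | succ n ih =>
    simp only [Function.iterate_succ_apply', ih,
      pd_add (contDiff_iterate_pd hf i n) (contDiff_iterate_pd hg i n)]

theorem iterate_pd_neg (i : Fin 3) (n : ℕ) : (pd i)^[n] (-f) = -(pd i)^[n] f :=
  (Function.Commute.iterate_left (fun h => pd_neg (f := h) i) n) f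

theorem iterate_pd_pd_comm (hf : ContDiff ℝ ∞ f) (i j : Fin 3) (n : ℕ) :
    (pd i)^[n] (pd j f) = pd j ((pd i)^[n] f) := by
  induction n with
  | zero => rfl
  | succ n ih =>
    rw [Function.iterate_succ_apply', ih, Function.iterate_succ_apply',
      pd_comm (contDiff_iterate_pd hf i n)]

theorem pdIter_add (hf : ContDiff ℝ ∞ f) (hg : ContDiff ℝ ∞ g) (a b c : ℕ) :
    pdIter a b c (f + g) = pdIter a b c f + pdIter a b c g := by
  simp only [pdIter, iterate_pd_add hf hg,
    iterate_pd_add (contDiff_iterate_pd hf 2 c) (contDiff_iterate_pd hg 2 c),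
    iterate_pd_add (contDiff_iterate_pd (contDiff_iterate_pd hf 2 c) 1 b)
      (contDiff_iterate_pd (contDiff_iterate_pd hg 2 c) 1 b)]

theorem pdIter_neg (a b c : ℕ) : pdIter a b c (-f) = -pdIter a b c f := by
  simp only [pdIter, iterate_pd_neg]

theorem pdIter_sub (hf : ContDiff ℝ ∞ f) (hg : ContDiff ℝ ∞ g) (a b c : ℕ) :
    pdIter a b c (f - g) = pdIter a b c f - pdIter a b c g := by
  rw [sub_eq_add_neg, pdIter_add (g := -g) hf hg.neg, pdIter_neg, ← sub_eq_add_neg]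

theorem pdIter_succ_right (a b c : ℕ) : pdIter a b (c + 1) f = pdIter a b c (pd 2 f) := rfl

theorem pdIter_pd_zero (hf : ContDiff ℝ ∞ f) (a b c : ℕ) :
    pdIter a b c (pd 0 f) = pdIter (a + 1) b c f := by
  rw [pdIter, iterate_pd_pd_comm hf, iterate_pd_pd_comm (contDiff_iterate_pd hf 2 c),
    ← Function.iterate_succ_apply (pd 0)]
  rfl

theorem pdIter_pd_one (hf : ContDiff ℝ ∞ f) (a b c : ℕ) :
    pdIter a b c (pd 1 f) = pdIter a (b + 1) c f := by
  rw [pdIter, iterate_pd_pd_comm hf, ← Function.iterate_succ_apply (pd 1)]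
  rfl

end PartialDerivatives

section CurlDiv

variable {v : (Fin 3 → ℝ) → Fin 3 → ℝ}

theorem contDiff_curl_apply (hv : ContDiff ℝ ∞ v) (i : Fin 3) :
    ContDiff ℝ ∞ fun x => curl v x i := by
  have hv' (j : Fin 3) : ContDiff ℝ ∞ fun x => v x j := contDiff_pi.1 hv j
  fin_cases i
  · exact (contDiff_pd (hv' 2) 1).sub (contDiff_pd (hv' 1) 2)
  · exact (contDiff_pd (hv' 0) 2).sub (contDiff_pd (hv' 2) 0)
  · exact (contDiff_pd (hv' 1) 0).sub (contDiff_pd (hv' 0) 1)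

theorem contDiff_divg (hv : ContDiff ℝ ∞ v) : ContDiff ℝ ∞ (divg v) :=
  have hv' (j : Fin 3) : ContDiff ℝ ∞ fun x => v x j := contDiff_pi.1 hv j
  ((contDiff_pd (hv' 0) 0).add (contDiff_pd (hv' 1) 1)).add (contDiff_pd (hv' 2) 2)

theorem pd_two_comp_zero (v : (Fin 3 → ℝ) → Fin 3 → ℝ) :
    pd 2 (fun x => v x 0) = (fun x => curl v x 1) + pd 0 (fun x => v x 2) := by
  ext x
  simp [curl]

theorem pd_two_comp_one (v : (Fin 3 → ℝ) → Fin 3 → ℝ) :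
    pd 2 (fun x => v x 1) = pd 1 (fun x => v x 2) - fun x => curl v x 0 := by
  ext x
  simp [curl]

theorem pd_two_comp_two (v : (Fin 3 → ℝ) → Fin 3 → ℝ) :
    pd 2 (fun x => v x 2) = divg v - pd 0 (fun x => v x 0) - pd 1 (fun x => v x 1) := by
  ext x
  simp only [divg, Pi.sub_apply]
  ring

theorem pdIter_succ_right_comp_zero (hv : ContDiff ℝ ∞ v) (a b c : ℕ) :
    pdIter a b (c + 1) (fun x => v x 0) =
      pdIter a b c (fun x => curl v x 1) + pdIter (a + 1) b c (fun x => v x 2) := by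
  have hv₂ : ContDiff ℝ ∞ fun x => v x 2 := contDiff_pi.1 hv 2
  rw [pdIter_succ_right, pd_two_comp_zero,
    pdIter_add (contDiff_curl_apply hv 1) (contDiff_pd hv₂ 0), pdIter_pd_zero hv₂]

theorem pdIter_succ_right_comp_one (hv : ContDiff ℝ ∞ v) (a b c : ℕ) :
    pdIter a b (c + 1) (fun x => v x 1) =
      pdIter a (b + 1) c (fun x => v x 2) - pdIter a b c (fun x => curl v x 0) := by
  have hv₂ : ContDiff ℝ ∞ fun x => v x 2 := contDiff_pi.1 hv 2
  rw [pdIter_succ_right, pd_two_comp_one,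
    pdIter_sub (contDiff_pd hv₂ 1) (contDiff_curl_apply hv 0), pdIter_pd_one hv₂]

theorem pdIter_succ_right_comp_two (hv : ContDiff ℝ ∞ v) (a b c : ℕ) :
    pdIter a b (c + 1) (fun x => v x 2) =
      pdIter a b c (divg v) - pdIter (a + 1) b c (fun x => v x 0)
        - pdIter a (b + 1) c (fun x => v x 1) := by
  have hv' (j : Fin 3) : ContDiff ℝ ∞ fun x => v x j := contDiff_pi.1 hv j
  rw [pdIter_succ_right, pd_two_comp_two,
    pdIter_sub (f := divg v - pd 0 fun x => v x 0)
      ((contDiff_divg hv).sub (contDiff_pd (hv' 0) 0)) (contDiff_pd (hv' 1) 1),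
    pdIter_sub (contDiff_divg hv) (contDiff_pd (hv' 0) 0), pdIter_pd_zero (hv' 0),
    pdIter_pd_one (hv' 1)]

end CurlDiv

section IntegralOfSquares

variable {α : Type*} [MeasurableSpace α] {μ : Measure α} {f g h : α → ℝ}

theorem integral_sq_add_le (hf : Integrable (fun x => f x ^ 2) μ)
    (hg : Integrable (fun x => g x ^ 2) μ) :
    ∫ x, (f x + g x) ^ 2 ∂μ ≤ 2 * ∫ x, f x ^ 2 ∂μ + 2 * ∫ x, g x ^ 2 ∂μ := by
  calc ∫ x, (f x + g x) ^ 2 ∂μ ≤ ∫ x, (2 * f x ^ 2 + 2 * g x ^ 2) ∂μ :=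
        integral_mono_of_nonneg (ae_of_all _ fun x => sq_nonneg _)
          ((hf.const_mul 2).add (hg.const_mul 2))
          (ae_of_all _ fun x => by nlinarith [sq_nonneg (f x - g x)])
    _ = 2 * ∫ x, f x ^ 2 ∂μ + 2 * ∫ x, g x ^ 2 ∂μ := by
        rw [integral_add (hf.const_mul 2) (hg.const_mul 2), integral_const_mul,
          integral_const_mul]

theorem integral_sq_sub_le (hf : Integrable (fun x => f x ^ 2) μ)
    (hg : Integrable (fun x => g x ^ 2) μ) :
    ∫ x, (f x - g x) ^ 2 ∂μ ≤ 2 * ∫ x, f x ^ 2 ∂μ + 2 * ∫ x, g x ^ 2 ∂μ := by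
  simpa [sub_eq_add_neg] using integral_sq_add_le (g := -g) hf (by simpa using hg)

theorem integral_sq_sub_sub_le (hf : Integrable (fun x => f x ^ 2) μ)
    (hg : Integrable (fun x => g x ^ 2) μ) (hh : Integrable (fun x => h x ^ 2) μ) :
    ∫ x, (f x - g x - h x) ^ 2 ∂μ ≤
      3 * ∫ x, f x ^ 2 ∂μ + 3 * ∫ x, g x ^ 2 ∂μ + 3 * ∫ x, h x ^ 2 ∂μ := by
  calc ∫ x, (f x - g x - h x) ^ 2 ∂μ ≤ ∫ x, (3 * f x ^ 2 + 3 * g x ^ 2 + 3 * h x ^ 2) ∂μ :=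
        integral_mono_of_nonneg (ae_of_all _ fun x => sq_nonneg _)
          (((hf.const_mul 3).add (hg.const_mul 3)).add (hh.const_mul 3))
          (ae_of_all _ fun x => by
            nlinarith [sq_nonneg (f x + g x), sq_nonneg (f x + h x), sq_nonneg (g x - h x)])
    _ = 3 * ∫ x, f x ^ 2 ∂μ + 3 * ∫ x, g x ^ 2 ∂μ + 3 * ∫ x, h x ^ 2 ∂μ := by
        rw [integral_add (f := fun x => 3 * f x ^ 2 + 3 * g x ^ 2)
            ((hf.const_mul 3).add (hg.const_mul 3)) (hh.const_mul 3),
          integral_add (hf.const_mul 3) (hg.const_mul 3), integral_const_mul,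
          integral_const_mul, integral_const_mul]

end IntegralOfSquares

theorem Continuous.integrableOn_of_isBounded {X : Type*} [MetricSpace X] [ProperSpace X]
    [MeasurableSpace X] [OpensMeasurableSpace X] {μ : Measure X} [IsFiniteMeasureOnCompacts μ]
    {f : X → ℝ} (hf : Continuous f) {S : Set X} (hS : IsBounded S) : IntegrableOn f S μ :=
  (hf.continuousOn.integrableOn_compact hS.isCompact_closure).mono_set subset_closure

theorem isBounded_slabFull : IsBounded slabFull := by
  refine isBounded_closedBall (x := 0) (r := 1) |>.subset fun x hx => ?_
  obtain ⟨h₀, h₁, h₂⟩ := hx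
  rw [mem_closedBall_zero_iff, pi_norm_le_iff_of_nonneg zero_le_one]
  intro i
  fin_cases i <;> simp [abs_le] <;> constructor <;> linarith [h₀.1, h₀.2, h₁.1, h₁.2, h₂.1, h₂.2]

section SobolevNorms

theorem sobSq_nonneg (k : ℕ) (S : Set (Fin 3 → ℝ)) (f : (Fin 3 → ℝ) → ℝ) :
    0 ≤ sobSq k S f := by
  unfold sobSq
  positivity

theorem sobAnisoSq_nonneg (m ℓ : ℕ) (S : Set (Fin 3 → ℝ)) (f : (Fin 3 → ℝ) → ℝ) :
    0 ≤ sobAnisoSq m ℓ S f := by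
  unfold sobAnisoSq sobSq
  positivity

theorem sobAnisoSq_le_sobAnisoSqVec (m ℓ : ℕ) (S : Set (Fin 3 → ℝ))
    (v : (Fin 3 → ℝ) → Fin 3 → ℝ) (i : Fin 3) :
    sobAnisoSq m ℓ S (fun x => v x i) ≤ sobAnisoSqVec m ℓ S v :=
  Finset.single_le_sum (f := fun j => sobAnisoSq m ℓ S fun x => v x j)
    (fun _ _ => sobAnisoSq_nonneg _ _ _ _) (Finset.mem_univ i)

variable {S : Set (Fin 3 → ℝ)} {f : (Fin 3 → ℝ) → ℝ}

theorem integral_sq_pdIter_le_sobSq {k a b c : ℕ} (h : a + b + c ≤ k) :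
    ∫ x in S, pdIter a b c f x ^ 2 ≤ sobSq k S f := by
  have mem {n : ℕ} (hn : n ≤ k) : n ∈ Finset.range (k + 1) := Finset.mem_range.2 (by omega)
  unfold sobSq
  refine le_trans ?_ (Finset.single_le_sum (fun _ _ => by positivity) (mem (n := a) (by omega)))
  refine le_trans ?_ (Finset.single_le_sum (fun _ _ => by positivity) (mem (n := b) (by omega)))
  refine le_trans ?_ (Finset.single_le_sum (fun _ _ => by positivity) (mem (n := c) (by omega)))
  rw [if_pos h]

theorem integral_sq_pdIter_le_sobAnisoSq {ℓ a b : ℕ} (h : a + b ≤ ℓ) :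
    ∫ x in S, pdIter a b 0 f x ^ 2 ≤ sobAnisoSq 0 ℓ S f := by
  have mem {n : ℕ} (hn : n ≤ ℓ) : n ∈ Finset.range (ℓ + 1) := Finset.mem_range.2 (by omega)
  unfold sobAnisoSq
  refine le_trans ?_ (Finset.single_le_sum (fun _ _ => by unfold sobSq; positivity)
    (mem (n := a) (by omega)))
  refine le_trans ?_ (Finset.single_le_sum (fun _ _ => by unfold sobSq; positivity)
    (mem (n := b) (by omega)))
  simp [if_pos h, sobSq, pdIter]

theorem sobSq_le_of_forall_integral_sq_le {k : ℕ} {M : ℝ} (hM₀ : 0 ≤ M)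
    (hM : ∀ a b c, a + b + c ≤ k → ∫ x in S, pdIter a b c f x ^ 2 ≤ M) :
    sobSq k S f ≤ (k + 1) ^ 3 * M := by
  unfold sobSq
  calc _ ≤ ∑ _a ∈ Finset.range (k + 1), ∑ _b ∈ Finset.range (k + 1),
        ∑ _c ∈ Finset.range (k + 1), M := by
        gcongr with a _ b _ c _
        split_ifs with h
        exacts [hM a b c h, hM₀]
    _ = (k + 1) ^ 3 * M := by simp; ring

end SobolevNorms

section HodgeEstimate

noncomputable def hodgeData (r : ℕ) (S : Set (Fin 3 → ℝ)) (v : (Fin 3 → ℝ) → Fin 3 → ℝ) : ℝ :=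
  sobAnisoSqVec 0 r S v + sobSq (r - 1) S (fun x => curl v x 0)
    + sobSq (r - 1) S (fun x => curl v x 1) + sobSq (r - 1) S (divg v)

theorem hodgeData_nonneg (r : ℕ) (S : Set (Fin 3 → ℝ)) (v : (Fin 3 → ℝ) → Fin 3 → ℝ) :
    0 ≤ hodgeData r S v := by
  unfold hodgeData sobAnisoSqVec sobAnisoSq sobSq
  positivity

theorem le_hodgeData (r : ℕ) (S : Set (Fin 3 → ℝ)) (v : (Fin 3 → ℝ) → Fin 3 → ℝ) :
    sobAnisoSqVec 0 r S v ≤ hodgeData r S v ∧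
      sobSq (r - 1) S (fun x => curl v x 0) ≤ hodgeData r S v ∧
      sobSq (r - 1) S (fun x => curl v x 1) ≤ hodgeData r S v ∧
      sobSq (r - 1) S (divg v) ≤ hodgeData r S v := by
  have h₀ := sobSq_nonneg (r - 1) S (fun x => curl v x 0)
  have h₁ := sobSq_nonneg (r - 1) S (fun x => curl v x 1)
  have h₂ := sobSq_nonneg (r - 1) S (divg v)
  have hA : 0 ≤ sobAnisoSqVec 0 r S v := by unfold sobAnisoSqVec sobAnisoSq sobSq; positivity
  unfold hodgeData
  refine ⟨?_, ?_, ?_, ?_⟩ <;> linarith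

variable {r : ℕ} {S : Set (Fin 3 → ℝ)} {v : (Fin 3 → ℝ) → Fin 3 → ℝ}

theorem integral_sq_pdIter_le_hodgeData (hS : IsBounded S) (hv : ContDiff ℝ ∞ v)
    {a b c : ℕ} (i : Fin 3) (h : a + b + c ≤ r) :
    ∫ x in S, pdIter a b c (fun x => v x i) x ^ 2 ≤ 9 ^ c * hodgeData r S v := by
  obtain ⟨hA, hcurl₀, hcurl₁, hdiv⟩ := le_hodgeData r S v
  induction c generalizing a b i with
  | zero =>
    rw [pow_zero, one_mul]
    exact ((integral_sq_pdIter_le_sobAnisoSq (a := a) (b := b) (by omega)).trans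
      (sobAnisoSq_le_sobAnisoSqVec 0 r S v i)).trans hA
  | succ c ih =>
    have hc : a + b + c ≤ r - 1 := by omega
    have hsq {g : (Fin 3 → ℝ) → ℝ} (hg : ContDiff ℝ ∞ g) : IntegrableOn (fun x => g x ^ 2) S :=
      (hg.continuous.pow 2).integrableOn_of_isBounded hS
    have hv' (j : Fin 3) : ContDiff ℝ ∞ fun x => v x j := contDiff_pi.1 hv j
    have hR₀ := hodgeData_nonneg r S v
    have hR : hodgeData r S v ≤ 9 ^ c * hodgeData r S v :=
      le_mul_of_one_le_left hR₀ (one_le_pow₀ (by norm_num))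
    -- a step costs at most `3 · (1 + 2) = 9`: one data term, two terms of the previous level
    rw [pow_succ]
    match i with
    | 0 =>
      rw [pdIter_succ_right_comp_zero hv]
      refine (integral_sq_add_le (hsq (contDiff_pdIter (contDiff_curl_apply hv 1) a b c))
        (hsq (contDiff_pdIter (hv' 2) (a + 1) b c))).trans ?_
      linarith [(integral_sq_pdIter_le_sobSq hc).trans hcurl₁,
        ih (a := a + 1) (b := b) 2 (by omega)]
    | 1 =>
      rw [pdIter_succ_right_comp_one hv]
      refine (integral_sq_sub_le (hsq (contDiff_pdIter (hv' 2) a (b + 1) c))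
        (hsq (contDiff_pdIter (contDiff_curl_apply hv 0) a b c))).trans ?_
      linarith [(integral_sq_pdIter_le_sobSq hc).trans hcurl₀,
        ih (a := a) (b := b + 1) 2 (by omega)]
    | 2 =>
      rw [pdIter_succ_right_comp_two hv]
      refine (integral_sq_sub_sub_le (hsq (contDiff_pdIter (contDiff_divg hv) a b c))
        (hsq (contDiff_pdIter (hv' 0) (a + 1) b c))
        (hsq (contDiff_pdIter (hv' 1) a (b + 1) c))).trans ?_
      linarith [(integral_sq_pdIter_le_sobSq hc).trans hdiv, ih (a := a + 1) (b := b) 0 (by omega),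
        ih (a := a) (b := b + 1) 1 (by omega)]

theorem sobSqVec_le_hodgeData (hS : IsBounded S) (hv : ContDiff ℝ ∞ v) :
    sobSqVec r S v ≤ 3 * (r + 1) ^ 3 * 9 ^ r * hodgeData r S v := by
  have hR₀ := hodgeData_nonneg r S v
  have hcomp (i : Fin 3) :
      sobSq r S (fun x => v x i) ≤ (r + 1) ^ 3 * (9 ^ r * hodgeData r S v) :=
    sobSq_le_of_forall_integral_sq_le (mul_nonneg (by positivity) hR₀) fun _ _ c h =>
      (integral_sq_pdIter_le_hodgeData hS hv i h).trans <|
        mul_le_mul_of_nonneg_right (pow_le_pow_right₀ (by norm_num) (by omega)) hR₀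
  calc sobSqVec r S v ≤ ∑ _i : Fin 3, (r + 1) ^ 3 * (9 ^ r * hodgeData r S v) :=
        Finset.sum_le_sum fun i _ => hcomp i
    _ = 3 * (r + 1) ^ 3 * 9 ^ r * hodgeData r S v := by simp; ring

end HodgeEstimate

theorem hodge_type_estimate_general (r : ℕ) :
    ∃ C : ℝ, 0 < C ∧
      ∀ v : (Fin 3 → ℝ) → Fin 3 → ℝ, ContDiff ℝ (⊤ : ℕ∞) v →
        (∀ i, HPeriodic fun x => v x i) →
        sobSqVec r slabFull v ≤
          C * (sobAnisoSqVec 0 r slabFull v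
            + sobSq (r - 1) slabFull (fun x => curl v x 0)
            + sobSq (r - 1) slabFull (fun x => curl v x 1)
            + sobSq (r - 1) slabFull (divg v)) :=
  ⟨3 * (r + 1) ^ 3 * 9 ^ r, by positivity,
    fun _ hv _ => sobSqVec_le_hodgeData isBounded_slabFull hv⟩

/-- Hodge-type estimate on the full slab `Ω = 𝕋² × (-1,1)`:
`‖v‖_r² ≲ ‖v‖_{0,r}² + ‖(curl v)_h‖_{r-1}² + ‖div v‖_{r-1}²`. -/
theorem hodge_type_estimate (r : ℕ) (hr : 1 ≤ r) :
    ∃ C : ℝ, 0 < C ∧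
      ∀ v : (Fin 3 → ℝ) → Fin 3 → ℝ, ContDiff ℝ (⊤ : ℕ∞) v →
        (∀ i, HPeriodic fun x => v x i) →
        sobSqVec r slabFull v ≤
          C * (sobAnisoSqVec 0 r slabFull v
            + sobSq (r - 1) slabFull (fun x => curl v x 0)
            + sobSq (r - 1) slabFull (fun x => curl v x 1)
            + sobSq (r - 1) slabFull (divg v)) :=
  hodge_type_estimate_general r
end

section
/- Fractional Sobolev product estimate on the torus 𝕋^d, Fourier-series formulation, low–high case: for every integer d ≥ 1 and all real numbers r, s₁, s₂ with 0 ≤ r ≤ s₁ ≤ s₂ and s₂ > r + d/2, there exists a constant C > 0 such that for all finitely supported functions f, g : ℤ^d → ℂ, one has ( Σ_{ξ∈ℤ^d} (1+|ξ|²)^r | Σ_{η∈ℤ^d} f(η) g(ξ−η) |² )^{1/2} ≤ C ( Σ_{ξ∈ℤ^d} (1+|ξ|²)^{s₁} |f(ξ)|² )^{1/2} ( Σ_{ξ∈ℤ^d} (1+|ξ|²)^{s₂} |g(ξ)|² )^{1/2}. (This is the estimate ‖fg‖_{H^r(𝕋^d)} ≲ ‖f‖_{H^{s₁}(𝕋^d)}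 ‖g‖_{H^{s₂}(𝕋^d)} expressed through Fourier coefficients, products of functions corresponding to convolution of their coefficient sequences.) -/
/-!
Write `w ξ = 1 + |ξ|²`. Peetre's inequality `w ξ ≤ 2 w η w (ξ - η)` moves the weight `w ξ ^ r`
of the product onto the two factors, and `r ≤ s₁` lets the factor of `f` absorb its share. Applying
Cauchy–Schwarz in `η` against the weight `w (ξ - η) ^ (r - s₂)`, whose sum over `ℤ^d` is finite
precisely because `s₂ - r > d / 2`, leaves `∑_η w η ^ s₁ |f η|² w (ξ - η) ^ s₂ |g (ξ - η)|²`, and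
summing this over `ξ` gives the product of the two Sobolev norms squared. The summability of
`w ^ (-t)` over `ℤ^d` for `t > d / 2` reduces to the one-dimensional case through
`∏ i, (1 + ξ i ^ 2) ≤ w ξ ^ d`.
-/

open Finset

lemma summable_fintype_prod_of_nonneg {ι : Type*} [Fintype ι] {κ : ι → Type*}
    {f : ∀ i, κ i → ℝ} (hf₀ : ∀ i j, 0 ≤ f i j) (hf : ∀ i, Summable (f i)) :
    Summable fun x : ∀ i, κ i => ∏ i, f i (x i) := by
  classical
  refine summable_of_sum_le (c := ∏ i, ∑' j, f i j)
    (fun x => prod_nonneg fun i _ => hf₀ i _) fun u => ?_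
  calc ∑ x ∈ u, ∏ i, f i (x i)
      ≤ ∑ x ∈ Fintype.piFinset fun i => u.image (· i), ∏ i, f i (x i) :=
        sum_le_sum_of_subset_of_nonneg
          (fun x hx => Fintype.mem_piFinset.2 fun i => mem_image_of_mem _ hx)
          fun x _ _ => prod_nonneg fun i _ => hf₀ i _
    _ = ∏ i, ∑ j ∈ u.image (· i), f i j := (prod_univ_sum _ _).symm
    _ ≤ ∏ i, ∑' j, f i j :=
        prod_le_prod (fun i _ => sum_nonneg fun j _ => hf₀ i j)
          fun i _ => (hf i).sum_le_tsum _ fun j _ => hf₀ i j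

lemma summable_one_add_sq_rpow_neg {b : ℝ} (hb : 1 / 2 < b) :
    Summable fun n : ℤ => (1 + (n : ℝ) ^ 2) ^ (-b) := by
  refine Summable.of_norm_bounded_eventually
    (Real.summable_abs_int_rpow (b := 2 * b) (by linarith))
    ((Filter.eventually_cofinite_ne 0).mono fun n hn => ?_)
  have hn2 : 0 < (n : ℝ) ^ 2 := by positivity
  rw [Real.norm_of_nonneg (by positivity)]
  calc (1 + (n : ℝ) ^ 2) ^ (-b) ≤ ((n : ℝ) ^ 2) ^ (-b) :=
        Real.rpow_le_rpow_of_nonpos hn2 (by linarith) (by linarith)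
    _ = |(n : ℝ)| ^ (-(2 * b)) := by
        rw [← sq_abs, ← Real.rpow_natCast, ← Real.rpow_mul (abs_nonneg _)]
        norm_num

section Convolution

variable {G α : Type*} [AddCommGroup G] [TopologicalSpace α]

lemma summable_comp_sub_right [AddCommMonoid α] {R : G → α} (hR : Summable R) (η : G) :
    Summable fun ξ => R (ξ - η) :=
  (Equiv.subRight η).summable_iff.2 hR

variable [NonUnitalNonAssocSemiring α] [IsTopologicalSemiring α] {R : G → α}

lemma summable_sum_mul_comp_sub (hR : Summable R) (P : G → α) (s : Finset G) :
    Summable fun ξ => ∑ η ∈ s, P η * R (ξ - η) :=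
  summable_sum fun η _ => (summable_comp_sub_right hR η).mul_left (P η)

lemma tsum_sum_mul_comp_sub [T2Space α] (hR : Summable R) (P : G → α) (s : Finset G) :
    ∑' ξ, ∑ η ∈ s, P η * R (ξ - η) = (∑ η ∈ s, P η) * ∑' μ, R μ := by
  rw [Summable.tsum_finsetSum fun η _ => (summable_comp_sub_right hR η).mul_left (P η), sum_mul]
  refine sum_congr rfl fun η _ => ?_
  rw [(summable_comp_sub_right hR η).tsum_mul_left]
  exact congrArg _ ((Equiv.subRight η).tsum_eq R)

end Convolution

noncomputable section

variable {ι : Type*} [Fintype ι]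

def sobolevWeight (ξ : ι → ℤ) : ℝ := 1 + ∑ i, (ξ i : ℝ) ^ 2

def sobolevNormSq (s : ℝ) (f : (ι → ℤ) → ℂ) : ℝ := ∑' ξ, sobolevWeight ξ ^ s * ‖f ξ‖ ^ 2

lemma one_le_sobolevWeight (ξ : ι → ℤ) : 1 ≤ sobolevWeight ξ :=
  le_add_of_nonneg_right (sum_nonneg fun _ _ => sq_nonneg _)

lemma sobolevWeight_pos (ξ : ι → ℤ) : 0 < sobolevWeight ξ :=
  one_pos.trans_le (one_le_sobolevWeight ξ)

lemma sobolevWeight_rpow_pos (ξ : ι → ℤ) (s : ℝ) : 0 < sobolevWeight ξ ^ s :=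
  Real.rpow_pos_of_pos (sobolevWeight_pos ξ) s

lemma sobolevWeight_le_two_mul_mul (ξ η : ι → ℤ) :
    sobolevWeight ξ ≤ 2 * sobolevWeight η * sobolevWeight (ξ - η) := by
  have hcoord : ∑ i, (ξ i : ℝ) ^ 2 ≤ ∑ i, (2 * (η i : ℝ) ^ 2 + 2 * ((ξ - η) i : ℝ) ^ 2) := by
    refine sum_le_sum fun i _ => ?_
    push_cast [Pi.sub_apply]
    nlinarith [sq_nonneg ((ξ i : ℝ) - 2 * η i)]
  rw [sum_add_distrib, ← mul_sum, ← mul_sum] at hcoord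
  have hA : 0 ≤ ∑ i, (η i : ℝ) ^ 2 := sum_nonneg fun i _ => sq_nonneg _
  have hB : 0 ≤ ∑ i, ((ξ - η) i : ℝ) ^ 2 := sum_nonneg fun i _ => sq_nonneg _
  simp only [sobolevWeight]
  nlinarith [mul_nonneg hA hB]

lemma sobolevWeight_rpow_le {r s : ℝ} (h0 : 0 ≤ r) (h1 : r ≤ s) (ξ η : ι → ℤ) :
    sobolevWeight ξ ^ r ≤ 2 ^ r * sobolevWeight η ^ s * sobolevWeight (ξ - η) ^ r := by
  have hη := sobolevWeight_pos η
  have hξη := sobolevWeight_pos (ξ - η)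
  calc sobolevWeight ξ ^ r ≤ (2 * sobolevWeight η * sobolevWeight (ξ - η)) ^ r :=
        Real.rpow_le_rpow (sobolevWeight_pos ξ).le (sobolevWeight_le_two_mul_mul ξ η) h0
    _ = 2 ^ r * sobolevWeight η ^ r * sobolevWeight (ξ - η) ^ r := by
        rw [Real.mul_rpow (by positivity) hξη.le, Real.mul_rpow zero_le_two hη.le]
    _ ≤ 2 ^ r * sobolevWeight η ^ s * sobolevWeight (ξ - η) ^ r := by
        gcongr
        exact one_le_sobolevWeight η

lemma summable_sobolevWeight_rpow_neg {t : ℝ} (ht : (Fintype.card ι : ℝ) / 2 < t) :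
    Summable fun ξ : ι → ℤ => sobolevWeight ξ ^ (-t) := by
  set c : ℝ := (Fintype.card ι : ℝ)
  have hc : 0 ≤ c := Nat.cast_nonneg _
  -- any `b > 1/2` with `b * c ≤ t` works; this one avoids dividing by `c = 0`
  obtain ⟨b, hb, hbc⟩ : ∃ b : ℝ, 1 / 2 < b ∧ b * c ≤ t := by
    refine ⟨1 / 2 + (t - c / 2) / (c + 1), lt_add_of_pos_right _ (by positivity), ?_⟩
    have : (t - c / 2) / (c + 1) * c ≤ t - c / 2 := by
      rw [div_mul_eq_mul_div, div_le_iff₀ (by positivity)]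
      nlinarith
    linarith
  refine Summable.of_nonneg_of_le (fun ξ => (sobolevWeight_rpow_pos ξ _).le)
    (fun ξ => ?_) (summable_fintype_prod_of_nonneg (fun _ _ => by positivity)
      fun _ => summable_one_add_sq_rpow_neg hb)
  have hfactor (i : ι) : 1 + (ξ i : ℝ) ^ 2 ≤ sobolevWeight ξ :=
    add_le_add_right (single_le_sum (f := fun j => (ξ j : ℝ) ^ 2)
      (fun j _ => sq_nonneg _) (mem_univ i)) 1
  calc sobolevWeight ξ ^ (-t) ≤ sobolevWeight ξ ^ (c * -b) :=
        Real.rpow_le_rpow_of_exponent_le (one_le_sobolevWeight ξ) (by linarith)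
    _ = (sobolevWeight ξ ^ Fintype.card ι) ^ (-b) :=
        Real.rpow_natCast_mul (sobolevWeight_pos ξ).le _ _
    _ ≤ (∏ i, (1 + (ξ i : ℝ) ^ 2)) ^ (-b) := by
        refine Real.rpow_le_rpow_of_nonpos (prod_pos fun i _ => by positivity) ?_ (by linarith)
        exact (prod_le_prod (fun i _ => by positivity) fun i _ => hfactor i).trans_eq
          (by rw [prod_const, card_univ])
    _ = ∏ i, (1 + (ξ i : ℝ) ^ 2) ^ (-b) :=
        (Real.finsetProd_rpow _ _ (fun i _ => by positivity) _).symm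

lemma sobolevWeight_rpow_mul_norm_sum_mul_sq_le {r s₁ s₂ : ℝ} (h0 : 0 ≤ r) (h1 : r ≤ s₁)
    (f g : (ι → ℤ) → ℂ) (s : Finset (ι → ℤ)) (ξ : ι → ℤ) :
    sobolevWeight ξ ^ r * ‖∑ η ∈ s, f η * g (ξ - η)‖ ^ 2 ≤
      2 ^ r * (∑ η ∈ s, sobolevWeight (ξ - η) ^ (r - s₂)) *
        ∑ η ∈ s, sobolevWeight η ^ s₁ * ‖f η‖ ^ 2 *
          (sobolevWeight (ξ - η) ^ s₂ * ‖g (ξ - η)‖ ^ 2) := by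
  set w : ℝ := sobolevWeight ξ ^ r
  have hw : 0 ≤ w := (sobolevWeight_rpow_pos ξ r).le
  have htri : ‖∑ η ∈ s, f η * g (ξ - η)‖ ≤ ∑ η ∈ s, ‖f η‖ * ‖g (ξ - η)‖ :=
    norm_sum_le_of_le _ fun η _ => (norm_mul _ _).le
  have hterm (η : ι → ℤ) : (√w * (‖f η‖ * ‖g (ξ - η)‖)) ^ 2 ≤
      sobolevWeight (ξ - η) ^ (r - s₂) * (2 ^ r * (sobolevWeight η ^ s₁ * ‖f η‖ ^ 2 *
        (sobolevWeight (ξ - η) ^ s₂ * ‖g (ξ - η)‖ ^ 2))) := by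
    have hsplit : sobolevWeight (ξ - η) ^ (r - s₂) * sobolevWeight (ξ - η) ^ s₂ =
        sobolevWeight (ξ - η) ^ r := by
      rw [← Real.rpow_add (sobolevWeight_pos _), sub_add_cancel]
    calc (√w * (‖f η‖ * ‖g (ξ - η)‖)) ^ 2 = w * (‖f η‖ * ‖g (ξ - η)‖) ^ 2 := by
          rw [mul_pow, Real.sq_sqrt hw]
      _ ≤ 2 ^ r * sobolevWeight η ^ s₁ * sobolevWeight (ξ - η) ^ r *
            (‖f η‖ * ‖g (ξ - η)‖) ^ 2 :=
          mul_le_mul_of_nonneg_right (sobolevWeight_rpow_le h0 h1 ξ η) (sq_nonneg _)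
      _ = _ := by rw [← hsplit]; ring
  have hCS := sum_sq_le_sum_mul_sum_of_sq_le_mul s
    (fun η _ => (sobolevWeight_rpow_pos (ξ - η) (r - s₂)).le)
    (fun η _ => mul_nonneg (by positivity) (mul_nonneg
      (mul_nonneg (sobolevWeight_rpow_pos η s₁).le (sq_nonneg _))
      (mul_nonneg (sobolevWeight_rpow_pos (ξ - η) s₂).le (sq_nonneg _))))
    fun η _ => hterm η
  calc w * ‖∑ η ∈ s, f η * g (ξ - η)‖ ^ 2 ≤ w * (∑ η ∈ s, ‖f η‖ * ‖g (ξ - η)‖) ^ 2 := by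
        gcongr
    _ = (∑ η ∈ s, √w * (‖f η‖ * ‖g (ξ - η)‖)) ^ 2 := by
        rw [← mul_sum, mul_pow, Real.sq_sqrt hw]
    _ ≤ _ := hCS
    _ = _ := by rw [← mul_sum]; ring

lemma sum_sobolevWeight_sub_rpow_le_tsum {a : ℝ}
    (hS : Summable fun μ : ι → ℤ => sobolevWeight μ ^ a) (s : Finset (ι → ℤ)) (ξ : ι → ℤ) :
    ∑ η ∈ s, sobolevWeight (ξ - η) ^ a ≤ ∑' μ : ι → ℤ, sobolevWeight μ ^ a := by
  rw [← (Equiv.subLeft ξ).tsum_eq fun μ => sobolevWeight μ ^ a]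
  exact ((Equiv.subLeft ξ).summable_iff.2 hS).sum_le_tsum _
    fun η _ => (sobolevWeight_rpow_pos (ξ - η) a).le

lemma sobolevNormSq_nonneg (s : ℝ) (f : (ι → ℤ) → ℂ) : 0 ≤ sobolevNormSq s f :=
  tsum_nonneg fun ξ => mul_nonneg (sobolevWeight_rpow_pos ξ s).le (sq_nonneg _)

lemma summable_sobolevWeight_rpow_mul_norm_sq {f : (ι → ℤ) → ℂ} (hf : f.support.Finite)
    (s : ℝ) : Summable fun ξ => sobolevWeight ξ ^ s * ‖f ξ‖ ^ 2 :=
  summable_of_hasFiniteSupport <| hf.subset fun ξ hξ h => hξ (by simp [h])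

lemma sobolevNormSq_conv_le {r s₁ s₂ : ℝ} (h0 : 0 ≤ r) (h1 : r ≤ s₁)
    (hS : Summable fun ξ : ι → ℤ => sobolevWeight ξ ^ (r - s₂)) {f g : (ι → ℤ) → ℂ}
    (hf : f.support.Finite) (hg : Summable fun ξ => sobolevWeight ξ ^ s₂ * ‖g ξ‖ ^ 2) :
    sobolevNormSq r (fun ξ => ∑' η, f η * g (ξ - η)) ≤
      2 ^ r * (∑' ξ : ι → ℤ, sobolevWeight ξ ^ (r - s₂)) *
        (sobolevNormSq s₁ f * sobolevNormSq s₂ g) := by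
  set C := 2 ^ r * ∑' ξ : ι → ℤ, sobolevWeight ξ ^ (r - s₂)
  set P : (ι → ℤ) → ℝ := fun η => sobolevWeight η ^ s₁ * ‖f η‖ ^ 2
  set R : (ι → ℤ) → ℝ := fun μ => sobolevWeight μ ^ s₂ * ‖g μ‖ ^ 2
  have hP₀ (η : ι → ℤ) : 0 ≤ P η := mul_nonneg (sobolevWeight_rpow_pos η s₁).le (sq_nonneg _)
  have hR₀ (μ : ι → ℤ) : 0 ≤ R μ := mul_nonneg (sobolevWeight_rpow_pos μ s₂).le (sq_nonneg _)
  have hPsupp : P.support ⊆ hf.toFinset := fun η hη =>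
    hf.mem_toFinset.2 fun h => hη (by simp [P, h])
  have hconv (ξ : ι → ℤ) : ∑' η, f η * g (ξ - η) = ∑ η ∈ hf.toFinset, f η * g (ξ - η) :=
    tsum_eq_sum' ((Function.support_mul_subset_left _ _).trans hf.coe_toFinset.ge)
  have hbound (ξ : ι → ℤ) : sobolevWeight ξ ^ r * ‖∑' η, f η * g (ξ - η)‖ ^ 2 ≤
      C * ∑ η ∈ hf.toFinset, P η * R (ξ - η) := by
    rw [hconv]
    refine (sobolevWeight_rpow_mul_norm_sum_mul_sq_le (s₂ := s₂) h0 h1 f g _ ξ).trans ?_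
    refine mul_le_mul_of_nonneg_right (mul_le_mul_of_nonneg_left
      (sum_sobolevWeight_sub_rpow_le_tsum hS _ ξ) (by positivity)) ?_
    exact sum_nonneg fun η _ => mul_nonneg (hP₀ η) (hR₀ _)
  have hsum := (summable_sum_mul_comp_sub hg P hf.toFinset).mul_left C
  calc sobolevNormSq r (fun ξ => ∑' η, f η * g (ξ - η))
      ≤ ∑' ξ, C * ∑ η ∈ hf.toFinset, P η * R (ξ - η) :=
        (hsum.of_nonneg_of_le (fun ξ => mul_nonneg (sobolevWeight_rpow_pos ξ r).le
          (sq_nonneg _)) hbound).tsum_le_tsum hbound hsum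
    _ = C * (sobolevNormSq s₁ f * sobolevNormSq s₂ g) := by
        rw [tsum_mul_left, tsum_sum_mul_comp_sub hg, sobolevNormSq, sobolevNormSq,
          tsum_eq_sum' hPsupp]

end

theorem torus_product_low_high_general (d : ℕ) (r s₁ s₂ : ℝ)
    (h0 : 0 ≤ r) (h1 : r ≤ s₁) (h3 : r + (d : ℝ) / 2 < s₂) :
    ∃ C : ℝ, 0 < C ∧
      ∀ f g : (Fin d → ℤ) → ℂ,
        (Function.support f).Finite → (Function.support g).Finite →
        Real.sqrt (∑' ξ : Fin d → ℤ,
            (1 + ∑ i, ((ξ i : ℝ)) ^ 2) ^ r * ‖∑' η : Fin d → ℤ, f η * g (ξ - η)‖ ^ 2) ≤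
          C * Real.sqrt (∑' ξ : Fin d → ℤ, (1 + ∑ i, ((ξ i : ℝ)) ^ 2) ^ s₁ * ‖f ξ‖ ^ 2)
            * Real.sqrt (∑' ξ : Fin d → ℤ, (1 + ∑ i, ((ξ i : ℝ)) ^ 2) ^ s₂ * ‖g ξ‖ ^ 2) := by
  have hS : Summable fun ξ : Fin d → ℤ => sobolevWeight ξ ^ (r - s₂) := by
    simpa using summable_sobolevWeight_rpow_neg (ι := Fin d) (t := s₂ - r)
      (by rw [Fintype.card_fin]; linarith)
  have hC : 0 < 2 ^ r * ∑' ξ : Fin d → ℤ, sobolevWeight ξ ^ (r - s₂) :=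
    mul_pos (by positivity) (hS.tsum_pos (fun ξ => (sobolevWeight_rpow_pos ξ _).le) 0
      (sobolevWeight_rpow_pos 0 _))
  refine ⟨_, Real.sqrt_pos.2 hC, fun f g hf hg => ?_⟩
  change √(sobolevNormSq r fun ξ => ∑' η, f η * g (ξ - η)) ≤
    _ * √(sobolevNormSq s₁ f) * √(sobolevNormSq s₂ g)
  rw [← Real.sqrt_mul' _ (sobolevNormSq_nonneg s₁ f),
    ← Real.sqrt_mul' _ (sobolevNormSq_nonneg s₂ g), mul_assoc]
  exact Real.sqrt_le_sqrt (sobolevNormSq_conv_le h0 h1 hS hf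
    (summable_sobolevWeight_rpow_mul_norm_sq hg s₂))

/-- Fractional Sobolev product estimate on `𝕋^d` in Fourier-series form,
low–high case: for `0 ≤ r ≤ s₁ ≤ s₂` with `s₂ > r + d/2`,
`‖fg‖_{H^r} ≲ ‖f‖_{H^{s₁}} ‖g‖_{H^{s₂}}`, products corresponding to convolution of the
(finitely supported) Fourier coefficient sequences. -/
theorem torus_product_low_high (d : ℕ) (hd : 1 ≤ d) (r s₁ s₂ : ℝ)
    (h0 : 0 ≤ r) (h1 : r ≤ s₁) (h2 : s₁ ≤ s₂) (h3 : r + (d : ℝ) / 2 < s₂) :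
    ∃ C : ℝ, 0 < C ∧
      ∀ f g : (Fin d → ℤ) → ℂ,
        (Function.support f).Finite → (Function.support g).Finite →
        Real.sqrt (∑' ξ : Fin d → ℤ,
            (1 + ∑ i, ((ξ i : ℝ)) ^ 2) ^ r * ‖∑' η : Fin d → ℤ, f η * g (ξ - η)‖ ^ 2) ≤
          C * Real.sqrt (∑' ξ : Fin d → ℤ, (1 + ∑ i, ((ξ i : ℝ)) ^ 2) ^ s₁ * ‖f ξ‖ ^ 2)
            * Real.sqrt (∑' ξ : Fin d → ℤ, (1 + ∑ i, ((ξ i : ℝ)) ^ 2) ^ s₂ * ‖g ξ‖ ^ 2) :=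
  torus_product_low_high_general d r s₁ s₂ h0 h1 h3
end
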